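/- Let ε ∈ [0,1), M > 1, and let 𝓟 and 𝓔 be nonempty sets of density matrices on ℂ^d. Then there exists a CPTP map F from 2×2 complex matrices to d×d complex matrices satisfying (i) F(π_{M′}) ∈ 𝓔 for every M′ ∈ [M,∞) and (ii) T(F(|1⟩⟨1|), ρ) ≤ ε for some ρ ∈ 𝓟, if and only if there exist ω ∈ B_ε(𝓟) and τ in the topological closure of 𝓔 such that (1−λ)τ + λω ∈ 𝓔 for every λ ∈ (0, 1/M]. -/

import Mathlib

/-!
A qubit channel `F` sends `π_{M'}` to `(1 - 1/M') τ + (1/M') ω`, where `τ = F |0⟩⟨0|` and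
`ω = F |1⟩⟨1|`; so the condition on `F` for `M' ≥ M` is exactly the segment condition for
`λ = 1/M' ∈ (0, 1/M]`, and letting `λ → 0` puts `τ` in the closure of `𝓔`. Conversely, the
measure-and-prepare channel `X ↦ X₀₀ τ + X₁₁ ω` realises any pair of density matrices, and `τ`
is one since density matrices form a closed set.
-/

open Matrix ComplexOrder

/-- The positive semidefinite square root (removed from Mathlib; old definition restored). -/
noncomputable def Matrix.PosSemidef.sqrt {n 𝕜 : Type*} [Fintype n] [DecidableEq n] [RCLike 𝕜]
    {A : Matrix n n 𝕜} (hA : A.PosSemidef) : Matrix n n 𝕜 :=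
  hA.1.eigenvectorUnitary.1 * diagonal ((↑) ∘ (√·) ∘ hA.1.eigenvalues) *
  (star hA.1.eigenvectorUnitary : Matrix n n 𝕜)

/-- Trace norm of a complex matrix: the trace of `sqrt(AᴴA)` (sum of singular values). -/
noncomputable def traceNorm {n : Type*} [Fintype n] [DecidableEq n]
    (A : Matrix n n ℂ) : ℝ :=
  ((Matrix.posSemidef_conjTranspose_mul_self A).sqrt.trace).re

/-- Trace distance `T(X,Y) = ‖X - Y‖₁ / 2`. -/
noncomputable def traceDist {n : Type*} [Fintype n] [DecidableEq n]
    (X Y : Matrix n n ℂ) : ℝ :=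
  traceNorm (X - Y) / 2

/-- A density matrix: positive semidefinite with unit trace. -/
def IsDensityMatrix {n : Type*} [Fintype n] (ρ : Matrix n n ℂ) : Prop :=
  ρ.PosSemidef ∧ ρ.trace = 1

/-- The battery Gibbs state `π_M = diag(1 - 1/M, 1/M)`. -/
noncomputable def piM (M : ℝ) : Matrix (Fin 2) (Fin 2) ℂ :=
  Matrix.diagonal ![((1 - 1/M : ℝ) : ℂ), ((1/M : ℝ) : ℂ)]

/-- The excited battery state `|1⟩⟨1| = diag(0,1)`. -/
def ket1 : Matrix (Fin 2) (Fin 2) ℂ :=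
  Matrix.diagonal ![0, 1]

/-- A test (POVM effect): `0 ≤ E ≤ I`. -/
def IsTest {n : Type*} [Fintype n] [DecidableEq n] (E : Matrix n n ℂ) : Prop :=
  E.PosSemidef ∧ (1 - E).PosSemidef

/-- Choi matrix `Σ_{ij} E_{ij} ⊗ F(E_{ij})` of a linear map on matrices. -/
noncomputable def choiMatrix {n m : Type*} [Fintype n] [DecidableEq n] [Fintype m]
    (F : Matrix n n ℂ →ₗ[ℂ] Matrix m m ℂ) :
    Matrix (n × m) (n × m) ℂ :=
  fun p q => F (Matrix.single p.1 q.1 1) p.2 q.2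

/-- Completely positive (positive semidefinite Choi matrix) and trace preserving. -/
def IsCPTP {n m : Type*} [Fintype n] [DecidableEq n] [Fintype m]
    (F : Matrix n n ℂ →ₗ[ℂ] Matrix m m ℂ) : Prop :=
  (choiMatrix F).PosSemidef ∧ ∀ X, (F X).trace = X.trace

/-- `n`-fold Kronecker (tensor) power of a `2 × 2` matrix, indexed by bit strings. -/
def tensPow (A : Matrix (Fin 2) (Fin 2) ℂ) (n : ℕ) :
    Matrix (Fin n → Fin 2) (Fin n → Fin 2) ℂ :=
  fun x y => ∏ i, A (x i) (y i)

/-- `ε`-ball (in trace distance) of density matrices around a set `𝓟`. -/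
noncomputable def metBall {n : Type*} [Fintype n] [DecidableEq n]
    (ε : ℝ) (P : Set (Matrix n n ℂ)) : Set (Matrix n n ℂ) :=
  {ω | IsDensityMatrix ω ∧ ∃ ρ ∈ P, traceDist ω ρ ≤ ε}

open Topology
open scoped Kronecker

section Closed

variable {n : Type*} [Fintype n]

theorem isClosed_setOf_posSemidef : IsClosed {A : Matrix n n ℂ | A.PosSemidef} := by
  simp only [posSemidef_iff_dotProduct_mulVec, Set.ofPred_and, Set.ofPred_forall]
  refine (isClosed_eq continuous_id.matrix_conjTranspose continuous_id).inter
    (isClosed_iInter fun x => isClosed_le continuous_const ?_)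
  fun_prop

theorem isClosed_setOf_isDensityMatrix : IsClosed {A : Matrix n n ℂ | IsDensityMatrix A} :=
  isClosed_setOf_posSemidef.inter (isClosed_eq continuous_id.matrix_trace continuous_const)

end Closed

theorem mem_closure_of_forall_Ioc_mem {E : Type*} [AddCommGroup E] [Module ℝ E]
    [TopologicalSpace E] [ContinuousAdd E] [ContinuousSMul ℝ E] {s : Set E} {x y : E} {c : ℝ}
    (hc : 0 < c) (h : ∀ t ∈ Set.Ioc 0 c, (1 - t) • x + t • y ∈ s) : x ∈ closure s := by
  have hlim : Filter.Tendsto (fun t : ℝ => (1 - t) • x + t • y) (𝓝[>] 0) (𝓝 x) := by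
    have hcont : Continuous fun t : ℝ => (1 - t) • x + t • y := by fun_prop
    simpa using (hcont.tendsto 0).mono_left nhdsWithin_le_nhds
  exact mem_closure_of_tendsto hlim (Filter.mem_of_superset (Ioc_mem_nhdsGT hc) h)

section Channel

variable {n m : Type*} [Fintype n] [DecidableEq n]

theorem IsCPTP.isDensityMatrix_map_single [Fintype m] {F : Matrix n n ℂ →ₗ[ℂ] Matrix m m ℂ}
    (hF : IsCPTP F) (i : n) : IsDensityMatrix (F (single i i 1)) :=
  ⟨hF.1.submatrix (Prod.mk i), by rw [hF.2, trace_single_eq_same]⟩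

noncomputable def measurePrepare (σ : n → Matrix m m ℂ) : Matrix n n ℂ →ₗ[ℂ] Matrix m m ℂ where
  toFun X := ∑ i, X i i • σ i
  map_add' X Y := by simp only [Matrix.add_apply, add_smul, Finset.sum_add_distrib]
  map_smul' c X := by
    simp only [Matrix.smul_apply, smul_eq_mul, mul_smul, RingHom.id_apply, Finset.smul_sum]

theorem measurePrepare_single_self (σ : n → Matrix m m ℂ) (i : n) :
    measurePrepare σ (single i i 1) = σ i := by
  simp [measurePrepare, single_apply]

theorem choiMatrix_measurePrepare [Fintype m] (σ : n → Matrix m m ℂ) :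
    choiMatrix (measurePrepare σ) = ∑ i, single i i 1 ⊗ₖ σ i := by
  ext ⟨a, b⟩ ⟨a', b'⟩
  simp [choiMatrix, measurePrepare, single_apply, Matrix.sum_apply, kroneckerMap_apply,
    apply_ite (fun A : Matrix m m ℂ => A b b'), eq_comm]

theorem isCPTP_measurePrepare [Fintype m] {σ : n → Matrix m m ℂ}
    (hσ : ∀ i, IsDensityMatrix (σ i)) :
    IsCPTP (measurePrepare σ) := by
  refine ⟨?_, fun X => ?_⟩
  · rw [choiMatrix_measurePrepare]
    refine posSemidef_sum _ fun i _ => PosSemidef.kronecker ?_ (hσ i).1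
    rw [← diagonal_single]
    exact PosSemidef.diagonal (Pi.single_nonneg.2 zero_le_one)
  · simp only [measurePrepare, LinearMap.coe_mk, AddHom.coe_mk, trace_sum, trace_smul,
      (hσ _).2]
    simp [trace]

end Channel

section Battery

variable {m : Type*}

theorem ket1_eq_single : ket1 = single 1 1 1 := by
  rw [ket1, ← diagonal_single]
  congr 1
  ext i; fin_cases i <;> rfl

theorem piM_eq (M : ℝ) : piM M = (1 - 1 / M) • single 0 0 1 + (1 / M) • ket1 := by
  ext i j
  fin_cases i <;> fin_cases j <;> simp [piM, ket1, Complex.real_smul]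

theorem map_piM (F : Matrix (Fin 2) (Fin 2) ℂ →ₗ[ℂ] Matrix m m ℂ) (M : ℝ) :
    F (piM M) = (1 - 1 / M) • F (single 0 0 1) + (1 / M) • F ket1 := by
  rw [piM_eq, map_add, LinearMap.map_smul_of_tower, LinearMap.map_smul_of_tower]

theorem forall_map_piM_mem_iff (F : Matrix (Fin 2) (Fin 2) ℂ →ₗ[ℂ] Matrix m m ℂ)
    {S : Set (Matrix m m ℂ)} {M : ℝ} (hM : 0 < M) :
    (∀ M' : ℝ, M ≤ M' → F (piM M') ∈ S) ↔
      ∀ t ∈ Set.Ioc (0 : ℝ) (1 / M), (1 - t) • F (single 0 0 1) + t • F ket1 ∈ S := by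
  simp only [map_piM]
  refine ⟨fun h t ⟨ht0, htM⟩ => ?_, fun h M' hM' => h _ ⟨one_div_pos.2 (hM.trans_le hM'), ?_⟩⟩
  · simpa using h (1 / t) (by simpa using one_div_le_one_div_of_le ht0 htM)
  · exact one_div_le_one_div_of_le hM hM'

end Battery

theorem stmt_9_general {d : ℕ} (ε M : ℝ) (hM : 1 < M)
    (𝓟 𝓔 : Set (Matrix (Fin d) (Fin d) ℂ))
    (h𝓔 : ∀ τ ∈ 𝓔, IsDensityMatrix τ) :
    (∃ F : Matrix (Fin 2) (Fin 2) ℂ →ₗ[ℂ] Matrix (Fin d) (Fin d) ℂ,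
        IsCPTP F ∧ (∀ M' : ℝ, M ≤ M' → F (piM M') ∈ 𝓔) ∧
        ∃ ρ ∈ 𝓟, traceDist (F ket1) ρ ≤ ε) ↔
      (∃ ω ∈ metBall ε 𝓟, ∃ τ ∈ closure 𝓔,
        ∀ lam ∈ Set.Ioc (0:ℝ) (1/M), (1 - lam) • τ + lam • ω ∈ 𝓔) := by
  have hM₀ : 0 < M := zero_lt_one.trans hM
  constructor
  · rintro ⟨F, hF, hpiM, ρ, hρ, hdist⟩
    have hsegment := (forall_map_piM_mem_iff F hM₀).1 hpiM
    refine ⟨F ket1, ⟨?_, ρ, hρ, hdist⟩, F (single 0 0 1),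
      mem_closure_of_forall_Ioc_mem (one_div_pos.2 hM₀) hsegment, hsegment⟩
    simpa only [ket1_eq_single] using hF.isDensityMatrix_map_single 1
  · rintro ⟨ω, ⟨hω, ρ, hρ, hdist⟩, τ, hτ, hsegment⟩
    have hτ' : IsDensityMatrix τ := closure_minimal h𝓔 isClosed_setOf_isDensityMatrix hτ
    refine ⟨measurePrepare ![τ, ω], isCPTP_measurePrepare (Fin.forall_fin_two.2 ⟨hτ', hω⟩),
      (forall_map_piM_mem_iff _ hM₀).2 ?_, ρ, hρ, ?_⟩
    · simpa [ket1_eq_single, measurePrepare_single_self] using hsegment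
    · simpa [ket1_eq_single, measurePrepare_single_self] using hdist

/-- one-shot work of formation from a dirty battery under GPO is
characterized by a line-segment condition (subspace-constrained max-relative
entropy). -/
theorem stmt_9 {d : ℕ} (ε M : ℝ) (hε : ε ∈ Set.Ico (0:ℝ) 1) (hM : 1 < M)
    (𝓟 𝓔 : Set (Matrix (Fin d) (Fin d) ℂ))
    (h𝓟ne : 𝓟.Nonempty) (h𝓔ne : 𝓔.Nonempty)
    (h𝓟 : ∀ ρ ∈ 𝓟, IsDensityMatrix ρ) (h𝓔 : ∀ τ ∈ 𝓔, IsDensityMatrix τ) :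
    (∃ F : Matrix (Fin 2) (Fin 2) ℂ →ₗ[ℂ] Matrix (Fin d) (Fin d) ℂ,
        IsCPTP F ∧ (∀ M' : ℝ, M ≤ M' → F (piM M') ∈ 𝓔) ∧
        ∃ ρ ∈ 𝓟, traceDist (F ket1) ρ ≤ ε) ↔
      (∃ ω ∈ metBall ε 𝓟, ∃ τ ∈ closure 𝓔,
        ∀ lam ∈ Set.Ioc (0:ℝ) (1/M), (1 - lam) • τ + lam • ω ∈ 𝓔) :=
  stmt_9_general ε M hM 𝓟 𝓔 h𝓔
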